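/- arXiv:1612.01282 — 3 statements merged into one kernel-verified Lean document; each statement's English description precedes it below -/
import Mathlib

section
/- (Cut-set entropy lemma from the proof of Theorem 6) Consider any (n, M_1,…,M_L) cascade code. Fix l ∈ {1,…,L}, write S_{𝓛} = (S_1,…,S_L), S_{𝓛_l^c} = (S_{l+1},…,S_L), and for i = 1,…,n let S_{𝓛_l^c}^{-i} = (S_{𝓛_l^c,1},…,S_{𝓛_l^c,i-1}, S_{𝓛_l^c,i+1},…,S_{𝓛_l^c,n}) and U_{l,i} = (m_l, S_{𝓛_l^c}^{-i}). Then log M_l ≥ H(m_l) ≥ I(m_l; S_𝓛^n | S_{𝓛_l^c}^n) ≥ Σ_{i=1}^n I(S_{𝓛,i}; U_{l,i} | S_{𝓛_l^c,i}). -/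
namespace Cascade

structure FinPMF (Ω : Type) [Fintype Ω] where
  p : Ω → ℝ
  nonneg : ∀ ω, 0 ≤ p ω
  sum_one : ∑ ω, p ω = 1

variable {Ω : Type} [Fintype Ω]

/-- Probability that the random variable `X` takes the value `x`. -/
noncomputable def prob (μ : FinPMF Ω) {α : Type} [DecidableEq α] (X : Ω → α) (x : α) : ℝ :=
  ∑ ω ∈ Finset.univ.filter (fun ω => X ω = x), μ.p ω

/-- Expectation of a real random variable. -/
noncomputable def expect (μ : FinPMF Ω) (f : Ω → ℝ) : ℝ := ∑ ω, μ.p ω * f ω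

/-- Shannon entropy (base 2) of a finite-valued random variable. -/
noncomputable def entropy (μ : FinPMF Ω) {α : Type} [Fintype α] [DecidableEq α] (X : Ω → α) : ℝ :=
  -∑ x, prob μ X x * Real.logb 2 (prob μ X x)

/-- Conditional mutual information `I(X;Y|Z)` (base 2). -/
noncomputable def condMI (μ : FinPMF Ω) {α β γ : Type} [Fintype α] [DecidableEq α]
    [Fintype β] [DecidableEq β] [Fintype γ] [DecidableEq γ]
    (X : Ω → α) (Y : Ω → β) (Z : Ω → γ) : ℝ :=
  entropy μ (fun ω => (X ω, Z ω)) + entropy μ (fun ω => (Y ω, Z ω))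
    - entropy μ (fun ω => (X ω, Y ω, Z ω)) - entropy μ Z

/-- A cascade code: terminal `l` encodes its observed block together with the message
received from terminal `l-1` (messages are natural numbers; the message of terminal `l`
lies in `Fin (M l)`, and the initial message `m_0` is the constant `0`). -/
structure Code (L n : ℕ) (S : Fin L → Type) (Zhat : Type) where
  M : Fin L → ℕ
  M_pos : ∀ l, 0 < M l
  enc : (l : Fin L) → (Fin n → S l) → ℕ → Fin (M l)
  dec : ℕ → Fin n → Zhat

/-- `msg c s k` is the message `m_k` produced by terminal `k` (with `m_0 = 0`). -/
def msg {L n : ℕ} {S : Fin L → Type} {Zhat : Type} (c : Code L n S Zhat)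
    (s : ∀ l, Fin n → S l) : ℕ → ℕ
  | 0 => 0
  | k + 1 => if h : k < L then (c.enc ⟨k, h⟩ (s ⟨k, h⟩) (msg c s k) : ℕ) else msg c s k

/-- The i.i.d. pmf of `n` copies of the source tuple. -/
noncomputable def iidPMF {L : ℕ} {S : Fin L → Type} [∀ l, Fintype (S l)] (n : ℕ)
    (pS : (∀ l, S l) → ℝ) (h0 : ∀ s, 0 ≤ pS s) (h1 : ∑ s, pS s = 1) :
    FinPMF (Fin n → ∀ l, S l) where
  p ω := ∏ i, pS (ω i)
  nonneg ω := Finset.prod_nonneg fun i _ => h0 (ω i)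
  sum_one := by
    classical
    rw [← Fintype.piFinset_univ, ← Finset.prod_univ_sum (fun _ => Finset.univ) (fun _ s => pS s)]
    simp [h1]

/-- The reconstruction `Ẑ^n` produced by the code on source realization `ω`. -/
def reconstruct {L n : ℕ} {S : Fin L → Type} {Zhat : Type} (c : Code L n S Zhat)
    (ω : Fin n → ∀ l, S l) : Fin n → Zhat :=
  c.dec (msg c (fun l i => ω i l) L)

/-- Average per-letter distortion of the code on source realization `ω`. -/
noncomputable def avgDistortion {L n : ℕ} {S : Fin L → Type} {Zt Zhat : Type}
    (φ : (∀ l, S l) → Zt) (d : Zt → Zhat → ℝ) (c : Code L n S Zhat)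
    (ω : Fin n → ∀ l, S l) : ℝ :=
  (n : ℝ)⁻¹ * ∑ i, d (φ (ω i)) (reconstruct c ω i)

/-- The rate tuple `R` achieves distortion `D` for the cascade source coding problem. -/
def AchievesDistortion {L : ℕ} {S : Fin L → Type} [∀ l, Fintype (S l)]
    (pS : (∀ l, S l) → ℝ) (h0 : ∀ s, 0 ≤ pS s) (h1 : ∑ s, pS s = 1)
    {Zt Zhat : Type} (φ : (∀ l, S l) → Zt) (d : Zt → Zhat → ℝ)
    (R : Fin L → ℝ) (D : ℝ) : Prop :=
  ∀ ε : ℝ, 0 < ε → ∃ n : ℕ, 0 < n ∧ ∃ c : Code L n S Zhat,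
    (∀ l, Real.logb 2 (c.M l) / n ≤ R l + ε) ∧
    expect (iidPMF n pS h0 h1) (avgDistortion φ d c) ≤ D + ε


/-- The masked tuple representing the sources `S_{𝓛_l^c} = (S_{l+1},…,S_L)` after the cut. -/
def cutMask {L : ℕ} {S : Fin L → Type} (l : Fin L) (s : ∀ j, S j) : ∀ j, Option (S j) :=
  fun j => if l < j then some (s j) else none

/-- The message `m_l` of terminal `l`, as a `Fin (c.M l)`-valued random variable on the
block source realization. -/
def msgRV {L n : ℕ} {S : Fin L → Type} {Zhat : Type} (c : Code L n S Zhat) (l : Fin L)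
    (ω : Fin n → ∀ j, S j) : Fin (c.M l) :=
  c.enc l (fun i => ω i l) (msg c (fun l' i => ω i l') l.val)

section Basic
variable (μ : FinPMF Ω) {α β : Type} [DecidableEq α] [DecidableEq β]

lemma prob_nonneg (X : Ω → α) (x : α) : 0 ≤ prob μ X x :=
  Finset.sum_nonneg fun ω _ => μ.nonneg ω

lemma le_prob (X : Ω → α) (ω : Ω) : μ.p ω ≤ prob μ X (X ω) :=
  Finset.single_le_sum (fun ω' _ => μ.nonneg ω') (by simp)

lemma prob_mono (X : Ω → α) (Y : Ω → β) (ω : Ω)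
    (h : ∀ ω', X ω' = X ω → Y ω' = Y ω) : prob μ X (X ω) ≤ prob μ Y (Y ω) :=
  Finset.sum_le_sum_of_subset_of_nonneg
    (by intro ω' hω'; simp only [Finset.mem_filter, Finset.mem_univ, true_and] at *; exact h ω' hω')
    (fun ω' _ _ => μ.nonneg ω')

lemma sum_prob [Fintype α] (X : Ω → α) : ∑ x, prob μ X x = 1 := by
  rw [← μ.sum_one]
  exact Finset.sum_fiberwise Finset.univ X μ.p

lemma entropy_eq [Fintype α] (X : Ω → α) :
    entropy μ X = -∑ ω, μ.p ω * Real.logb 2 (prob μ X (X ω)) := by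
  unfold entropy
  congr 1
  rw [← Finset.sum_fiberwise Finset.univ X (fun ω => μ.p ω * Real.logb 2 (prob μ X (X ω)))]
  refine Finset.sum_congr rfl fun x _ => ?_
  rw [prob, Finset.sum_mul]
  refine Finset.sum_congr rfl fun ω hω => ?_
  simp only [Finset.mem_filter] at hω
  rw [hω.2, prob]

lemma entropy_congr [Fintype α] [Fintype β] {X : Ω → α} {Y : Ω → β}
    (h : ∀ ω ω', X ω = X ω' ↔ Y ω = Y ω') : entropy μ X = entropy μ Y := by
  rw [entropy_eq, entropy_eq]
  congr 1
  refine Finset.sum_congr rfl fun ω _ => ?_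
  have : prob μ X (X ω) = prob μ Y (Y ω) := by
    unfold prob
    refine Finset.sum_congr ?_ fun _ _ => rfl
    ext ω'; simp [h ω' ω]
  rw [this]

lemma sum_mul_comp [Fintype α] (V : Ω → α) (g : α → ℝ) :
    ∑ ω, μ.p ω * g (V ω) = ∑ v, prob μ V v * g v := by
  rw [← Finset.sum_fiberwise Finset.univ V (fun ω => μ.p ω * g (V ω))]
  refine Finset.sum_congr rfl fun v _ => ?_
  rw [prob, Finset.sum_mul]
  exact Finset.sum_congr rfl fun ω hω => by
    simp only [Finset.mem_filter] at hω; rw [hω.2]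

lemma entropy_const [Fintype α] (a : α) : entropy μ (fun _ => a) = 0 := by
  rw [entropy_eq]
  have h : prob μ (fun _ : Ω => a) a = 1 := by
    rw [prob, ← μ.sum_one]
    exact Finset.sum_congr (by simp) fun _ _ => rfl
  simp [h]

lemma entropy_le_logb_card [Fintype α] (X : Ω → α) (hα : 0 < Fintype.card α) :
    entropy μ X ≤ Real.logb 2 (Fintype.card α) := by
  set K : ℝ := (Fintype.card α : ℝ) with hKdef
  have hK : 0 < K := Nat.cast_pos.mpr hα
  have hlog2 : 0 < Real.log 2 := Real.log_pos one_lt_two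
  have h1 : Real.logb 2 K = ∑ x, prob μ X x * Real.logb 2 K := by
    rw [← Finset.sum_mul, sum_prob, one_mul]
  have key : entropy μ X - Real.logb 2 K ≤ 0 := by
    rw [entropy, h1, ← Finset.sum_neg_distrib, ← Finset.sum_sub_distrib]
    have hterm : ∀ x : α, -(prob μ X x * Real.logb 2 (prob μ X x)) - prob μ X x * Real.logb 2 K
        ≤ (1 / K - prob μ X x) / Real.log 2 := by
      intro x
      rcases eq_or_lt_of_le (prob_nonneg μ X x) with h0 | h0
      · rw [← h0]
        simp only [zero_mul, neg_zero, sub_zero, zero_mul, sub_zero]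
        positivity
      · set p := prob μ X x
        have hpK : 0 < p * K := by positivity
        have hlog : Real.log (1 / (p * K)) ≤ 1 / (p * K) - 1 :=
          Real.log_le_sub_one_of_pos (by positivity)
        rw [one_div, Real.log_inv] at hlog
        have h2 : -(p * Real.logb 2 p) - p * Real.logb 2 K
            = p * (-Real.log (p * K)) / Real.log 2 := by
          rw [Real.logb, Real.logb, Real.log_mul (ne_of_gt h0) (ne_of_gt hK)]
          field_simp
          ring
        rw [h2]
        rw [div_le_div_iff_of_pos_right hlog2]
        have h3 : p * (-Real.log (p * K)) ≤ p * ((p * K)⁻¹ - 1) :=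
          mul_le_mul_of_nonneg_left (by linarith) (le_of_lt h0)
        have h4 : p * ((p * K)⁻¹ - 1) = 1 / K - p := by
          field_simp
        linarith
    calc ∑ x, (-(prob μ X x * Real.logb 2 (prob μ X x)) - prob μ X x * Real.logb 2 K)
        ≤ ∑ x : α, (1 / K - prob μ X x) / Real.log 2 :=
          Finset.sum_le_sum fun x _ => hterm x
      _ = 0 := by
          rw [← Finset.sum_div, Finset.sum_sub_distrib, sum_prob,
            Finset.sum_const, Finset.card_univ, nsmul_eq_mul, ← hKdef]
          rw [mul_one_div, div_self (ne_of_gt hK)]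
          simp
  linarith

end Basic

section CMI
variable (μ : FinPMF Ω) {α β γ : Type} [Fintype α] [DecidableEq α]
    [Fintype β] [DecidableEq β] [Fintype γ] [DecidableEq γ]

lemma sum_prob_fst (X : Ω → α) (Z : Ω → γ) (z : γ) :
    ∑ x, prob μ (fun ω => (X ω, Z ω)) (x, z) = prob μ Z z := by
  rw [prob, ← Finset.sum_fiberwise (Finset.univ.filter fun ω => Z ω = z) X μ.p]
  refine Finset.sum_congr rfl fun x _ => Finset.sum_congr ?_ fun _ _ => rfl
  rw [Finset.filter_filter]
  ext ω
  simp only [Finset.mem_filter, Finset.mem_univ, true_and, Prod.mk.injEq]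
  tauto

lemma condMI_nonneg (X : Ω → α) (Y : Ω → β) (Z : Ω → γ) :
    0 ≤ condMI μ X Y Z := by
  classical
  set V : Ω → α × β × γ := fun ω => (X ω, Y ω, Z ω) with hV
  set A : Ω → ℝ := fun ω => prob μ (fun ω' => (X ω', Z ω')) (X ω, Z ω) with hA
  set B : Ω → ℝ := fun ω => prob μ (fun ω' => (Y ω', Z ω')) (Y ω, Z ω) with hB
  set C : Ω → ℝ := fun ω => prob μ V (V ω) with hC
  set D : Ω → ℝ := fun ω => prob μ Z (Z ω) with hD
  have hlog2 : 0 < Real.log 2 := Real.log_pos one_lt_two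
  have hrw : condMI μ X Y Z = (∑ ω, μ.p ω *
      (Real.log (C ω) + Real.log (D ω) - Real.log (A ω) - Real.log (B ω))) / Real.log 2 := by
    rw [condMI, entropy_eq, entropy_eq, entropy_eq, entropy_eq]
    have comb : ∀ sA sB sC sD : ℝ, -sA + -sB - -sC - -sD = (sC + sD) - (sA + sB) := by
      intros; ring
    rw [comb, ← Finset.sum_add_distrib, ← Finset.sum_add_distrib, ← Finset.sum_sub_distrib,
      Finset.sum_div]
    refine Finset.sum_congr rfl fun ω _ => ?_
    simp only [Real.logb, hA, hB, hC, hD, hV]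
    ring
  -- step 1 : the "sum of ratios" bound
  have claim2 : ∑ ω, μ.p ω * (A ω * B ω / (C ω * D ω)) ≤ 1 := by
    set a : α → γ → ℝ := fun x z => prob μ (fun ω' => (X ω', Z ω')) (x, z) with ha
    set b : β → γ → ℝ := fun y z => prob μ (fun ω' => (Y ω', Z ω')) (y, z) with hb
    set d : γ → ℝ := fun z => prob μ Z z with hd
    set g : α × β × γ → ℝ :=
      fun v => a v.1 v.2.2 * b v.2.1 v.2.2 / (prob μ V v * d v.2.2) with hg
    have hre : ∑ ω, μ.p ω * (A ω * B ω / (C ω * D ω)) = ∑ v, prob μ V v * g v :=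
      sum_mul_comp μ V g
    rw [hre]
    have step1 : ∑ v, prob μ V v * g v
        ≤ ∑ v : α × β × γ, a v.1 v.2.2 * b v.2.1 v.2.2 / d v.2.2 := by
      refine Finset.sum_le_sum fun v _ => ?_
      rcases eq_or_lt_of_le (prob_nonneg μ V v) with h0 | h0
      · rw [← h0, zero_mul]
        have h1 := prob_nonneg μ (fun ω' => (X ω', Z ω')) (v.1, v.2.2)
        have h2 := prob_nonneg μ (fun ω' => (Y ω', Z ω')) (v.2.1, v.2.2)
        have h3 := prob_nonneg μ Z v.2.2
        positivity
      · have hne : ∃ ω ∈ Finset.univ.filter (fun ω => V ω = v), μ.p ω ≠ 0 := by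
          by_contra hcon
          push_neg at hcon
          have : prob μ V v = 0 := Finset.sum_eq_zero hcon
          rw [this] at h0; exact lt_irrefl _ h0
        obtain ⟨ω, hω, -⟩ := hne
        simp only [Finset.mem_filter, Finset.mem_univ, true_and] at hω
        have hdc : prob μ V v ≤ d v.2.2 := by
          rw [← hω, hd]
          exact prob_mono μ V Z ω (fun ω' h => congrArg (fun p : α × β × γ => p.2.2) h)
        have hd0 : 0 < d v.2.2 := lt_of_lt_of_le h0 hdc
        have h1 : prob μ V v ≠ 0 := ne_of_gt h0
        have h2 : d v.2.2 ≠ 0 := ne_of_gt hd0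
        rw [hg]
        rw [show prob μ V v * (a v.1 v.2.2 * b v.2.1 v.2.2 / (prob μ V v * d v.2.2))
            = a v.1 v.2.2 * b v.2.1 v.2.2 / d v.2.2 by field_simp]
    refine le_trans step1 ?_
    have hinner : ∀ z, (∑ x, ∑ y, a x z * b y z / d z) = d z * d z / d z := by
      intro z
      have h1 : ∀ x, (∑ y, a x z * b y z / d z) = a x z * d z / d z := by
        intro x
        rw [← Finset.sum_div, ← Finset.mul_sum, hb, hd, sum_prob_fst μ Y Z z]
      rw [Finset.sum_congr rfl fun x _ => h1 x, ← Finset.sum_div, ← Finset.sum_mul,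
        ha, hd, sum_prob_fst μ X Z z]
    have hreord : ∑ v : α × β × γ, a v.1 v.2.2 * b v.2.1 v.2.2 / d v.2.2
        = ∑ z, ∑ x, ∑ y, a x z * b y z / d z := by
      simp only [Fintype.sum_prod_type]
      calc ∑ x, ∑ y, ∑ z, a x z * b y z / d z
          = ∑ x, ∑ z, ∑ y, a x z * b y z / d z :=
            Finset.sum_congr rfl fun x _ => Finset.sum_comm
        _ = ∑ z, ∑ x, ∑ y, a x z * b y z / d z := Finset.sum_comm
    rw [hreord, Finset.sum_congr rfl fun z _ => hinner z]
    have : ∀ z, d z * d z / d z ≤ d z := by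
      intro z
      rcases eq_or_ne (d z) 0 with h | h
      · simp [h]
      · rw [mul_div_assoc, div_self h, mul_one]
    calc ∑ z, d z * d z / d z ≤ ∑ z, d z := Finset.sum_le_sum fun z _ => this z
      _ = 1 := sum_prob μ Z
  -- step 2 : termwise Gibbs bound
  have key : ∑ ω, μ.p ω *
      (Real.log (A ω) + Real.log (B ω) - Real.log (C ω) - Real.log (D ω)) ≤ 0 := by
    have hterm : ∀ ω, μ.p ω *
        (Real.log (A ω) + Real.log (B ω) - Real.log (C ω) - Real.log (D ω))
        ≤ μ.p ω * (A ω * B ω / (C ω * D ω)) - μ.p ω := by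
      intro ω
      rcases eq_or_lt_of_le (μ.nonneg ω) with h0 | h0
      · rw [← h0]; simp
      · have hC0 : 0 < C ω := lt_of_lt_of_le h0 (le_prob μ V ω)
        have hA0 : C ω ≤ A ω := prob_mono μ V (fun ω' => (X ω', Z ω')) ω
          (fun ω' h => by
            simp only [hV, Prod.mk.injEq] at h ⊢
            exact ⟨h.1, h.2.2⟩)
        have hB0 : C ω ≤ B ω := prob_mono μ V (fun ω' => (Y ω', Z ω')) ω
          (fun ω' h => by
            simp only [hV, Prod.mk.injEq] at h ⊢
            exact ⟨h.2.1, h.2.2⟩)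
        have hD0 : C ω ≤ D ω := prob_mono μ V Z ω
          (fun ω' h => congrArg (fun p : α × β × γ => p.2.2) h)
        have hA1 : 0 < A ω := lt_of_lt_of_le hC0 hA0
        have hB1 : 0 < B ω := lt_of_lt_of_le hC0 hB0
        have hD1 : 0 < D ω := lt_of_lt_of_le hC0 hD0
        have hlogeq : Real.log (A ω) + Real.log (B ω) - Real.log (C ω) - Real.log (D ω)
            = Real.log (A ω * B ω / (C ω * D ω)) := by
          rw [Real.log_div (by positivity) (by positivity),
            Real.log_mul hA1.ne' hB1.ne', Real.log_mul hC0.ne' hD1.ne']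
          ring
        have hgibbs : Real.log (A ω * B ω / (C ω * D ω)) ≤ A ω * B ω / (C ω * D ω) - 1 :=
          Real.log_le_sub_one_of_pos (by positivity)
        rw [hlogeq]
        have := mul_le_mul_of_nonneg_left hgibbs h0.le
        linarith [this]
    calc ∑ ω, μ.p ω * (Real.log (A ω) + Real.log (B ω) - Real.log (C ω) - Real.log (D ω))
        ≤ ∑ ω, (μ.p ω * (A ω * B ω / (C ω * D ω)) - μ.p ω) :=
          Finset.sum_le_sum fun ω _ => hterm ω
      _ = (∑ ω, μ.p ω * (A ω * B ω / (C ω * D ω))) - 1 := by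
          rw [Finset.sum_sub_distrib, μ.sum_one]
      _ ≤ 0 := by linarith
  rw [hrw]
  apply div_nonneg _ hlog2.le
  have : ∑ ω, μ.p ω * (Real.log (C ω) + Real.log (D ω) - Real.log (A ω) - Real.log (B ω))
      = -∑ ω, μ.p ω * (Real.log (A ω) + Real.log (B ω) - Real.log (C ω) - Real.log (D ω)) := by
    rw [← Finset.sum_neg_distrib]
    exact Finset.sum_congr rfl fun ω _ => by ring
  rw [this]
  linarith

end CMI

section IID
variable {L : ℕ} {S : Fin L → Type} [∀ l, Fintype (S l)] [∀ l, DecidableEq (S l)]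
  {n : ℕ} (pS : (∀ l, S l) → ℝ) (h0 : ∀ s, 0 ≤ pS s) (h1 : ∑ s, pS s = 1)
  {α : Type} [Fintype α] [DecidableEq α]

/-- single-letter marginal of `g` -/
noncomputable def qm (g : (∀ l, S l) → α) (x : α) : ℝ :=
  ∑ s ∈ Finset.univ.filter (fun s => g s = x), pS s

lemma prob_iid_tuple (g : (∀ l, S l) → α) (v : Fin n → α) :
    prob (iidPMF n pS h0 h1) (fun ω => fun i => g (ω i)) v = ∏ i, qm pS g (v i) := by
  classical
  unfold qm
  rw [Finset.prod_univ_sum (fun i => Finset.univ.filter (fun s => g s = v i))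
    (fun _ s => pS s)]
  rw [prob]
  refine Finset.sum_congr ?_ fun _ _ => rfl
  ext ω
  simp only [Finset.mem_filter, Finset.mem_univ, true_and, Fintype.mem_piFinset, funext_iff]

lemma prob_iid_coord (g : (∀ l, S l) → α) (i : Fin n) (x : α) :
    prob (iidPMF n pS h0 h1) (fun ω => g (ω i)) x = qm pS g x := by
  classical
  have : ∀ j : Fin n, (∑ s ∈ (if j = i then Finset.univ.filter (fun s => g s = x)
      else Finset.univ), pS s) = if j = i then qm pS g x else 1 := by
    intro j
    split <;> simp [qm, h1]
  calc prob (iidPMF n pS h0 h1) (fun ω => g (ω i)) x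
      = ∑ ω ∈ Fintype.piFinset (fun j : Fin n => if j = i
          then Finset.univ.filter (fun s => g s = x) else Finset.univ), ∏ j, pS (ω j) := by
        rw [prob]
        refine Finset.sum_congr ?_ fun _ _ => rfl
        ext ω
        simp only [Finset.mem_filter, Finset.mem_univ, true_and, Fintype.mem_piFinset]
        constructor
        · intro h j
          split
          · next hj => subst hj; simp [h]
          · simp
        · intro h
          have := h i
          simpa using this
    _ = ∏ j, ∑ s ∈ (if j = i then Finset.univ.filter (fun s => g s = x)
          else Finset.univ), pS s := (Finset.prod_univ_sum _ _).symm
    _ = ∏ j : Fin n, (if j = i then qm pS g x else 1) := Finset.prod_congr rfl fun j _ => this j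
    _ = qm pS g x := by simp

lemma sum_pi_prod (f : Fin n → α → ℝ) :
    ∑ v : Fin n → α, ∏ i, f i (v i) = ∏ i, ∑ x, f i x := by
  classical
  rw [← Fintype.piFinset_univ]
  exact (Finset.prod_univ_sum _ _).symm

lemma entropy_iid_tuple (g : (∀ l, S l) → α) :
    entropy (iidPMF n pS h0 h1) (fun ω => fun i => g (ω i))
      = ∑ i, entropy (iidPMF n pS h0 h1) (fun ω => g (ω i)) := by
  classical
  set qq : α → ℝ := qm pS g with hqq
  have hq1 : ∑ x, qq x = 1 := by
    rw [hqq]; unfold qm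
    rw [Finset.sum_fiberwise Finset.univ g pS]
    exact h1
  have hRHS : ∀ i : Fin n, entropy (iidPMF n pS h0 h1) (fun ω => g (ω i))
      = -∑ x, qq x * Real.logb 2 (qq x) := by
    intro i
    rw [entropy]
    congr 1
    refine Finset.sum_congr rfl fun x _ => ?_
    rw [prob_iid_coord pS h0 h1 g i x]
  rw [entropy]
  have hLHS : ∀ v : Fin n → α,
      prob (iidPMF n pS h0 h1) (fun ω => fun i => g (ω i)) v = ∏ i, qq (v i) :=
    fun v => prob_iid_tuple pS h0 h1 g v
  calc -∑ v, prob (iidPMF n pS h0 h1) (fun ω => fun i => g (ω i)) v *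
        Real.logb 2 (prob (iidPMF n pS h0 h1) (fun ω => fun i => g (ω i)) v)
      = -∑ v : Fin n → α, ∑ i, (∏ j, (if j = i then qq (v j) * Real.logb 2 (qq (v j))
          else qq (v j))) := by
        congr 1
        refine Finset.sum_congr rfl fun v _ => ?_
        rw [hLHS v]
        have hsplit : ∀ i : Fin n, (∏ j, (if j = i then qq (v j) * Real.logb 2 (qq (v j))
            else qq (v j))) = (∏ j, qq (v j)) * Real.logb 2 (qq (v i)) := by
          intro i
          rw [← Finset.mul_prod_erase Finset.univ _ (Finset.mem_univ i),
            ← Finset.mul_prod_erase Finset.univ (fun j => qq (v j)) (Finset.mem_univ i)]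
          rw [if_pos rfl]
          rw [Finset.prod_congr rfl (fun j hj => if_neg (Finset.ne_of_mem_erase hj))]
          ring
        rw [Finset.sum_congr rfl fun i _ => hsplit i, ← Finset.mul_sum]
        by_cases hz : ∀ i, qq (v i) ≠ 0
        · rw [Real.logb_prod Finset.univ (fun j => qq (v j)) (fun i _ => hz i)]
        · push_neg at hz
          obtain ⟨i, hi⟩ := hz
          rw [Finset.prod_eq_zero (Finset.mem_univ i) hi]
          simp
    _ = ∑ i : Fin n, -∑ x, qq x * Real.logb 2 (qq x) := by
        rw [Finset.sum_comm, ← Finset.sum_neg_distrib]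
        refine Finset.sum_congr rfl fun i _ => ?_
        congr 1
        rw [sum_pi_prod (fun j x => if j = i then qq x * Real.logb 2 (qq x) else qq x)]
        rw [Finset.prod_congr rfl (fun j _ => show (∑ x, if j = i then qq x * Real.logb 2 (qq x)
            else qq x) = if j = i then ∑ x, qq x * Real.logb 2 (qq x) else 1 from by
          split <;> simp [hq1])]
        simp
    _ = ∑ i, entropy (iidPMF n pS h0 h1) (fun ω => g (ω i)) :=
        Finset.sum_congr rfl fun i _ => (hRHS i).symm

end IID

section Subadd
variable (μ : FinPMF Ω) {β γ : Type} [Fintype β] [DecidableEq β] [Fintype γ] [DecidableEq γ]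
  {n : ℕ}

lemma masked_subadd (V : Ω → Fin n → β) (W : Ω → γ) (s : Finset (Fin n)) :
    entropy μ (fun ω => ((fun i => if i ∈ s then some (V ω i) else none : Fin n → Option β), W ω))
      ≤ ∑ i ∈ s, entropy μ (fun ω => (V ω i, W ω)) - (s.card : ℝ) * entropy μ W
        + entropy μ W := by
  classical
  induction s using Finset.induction_on with
  | empty =>
    have h : entropy μ (fun ω => ((fun i : Fin n => if i ∈ (∅ : Finset (Fin n))
        then some (V ω i) else none), W ω)) = entropy μ W :=
      entropy_congr μ (by intro ω ω'; simp)
    rw [h]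
    simp
  | @insert a s' ha ih =>
    set A : Ω → β := fun ω => V ω a with hA
    set B : Ω → Fin n → Option β := fun ω => fun i => if i ∈ s' then some (V ω i) else none
      with hB
    have hcongr : entropy μ (fun ω => ((fun i : Fin n => if i ∈ insert a s'
        then some (V ω i) else none), W ω)) = entropy μ (fun ω => (A ω, B ω, W ω)) := by
      refine entropy_congr μ ?_
      intro ω ω'
      simp only [Prod.mk.injEq, funext_iff, hA, hB]
      constructor
      · rintro ⟨h1, h2⟩
        refine ⟨?_, fun i => ?_, h2⟩
        · have := h1 a
          simpa using this
        · have := h1 i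
          by_cases hi : i ∈ s'
          · have hi' : i ∈ insert a s' := Finset.mem_insert_of_mem hi
            simpa [hi, hi'] using this
          · simp [hi]
      · rintro ⟨h1, h2, h3⟩
        refine ⟨fun i => ?_, h3⟩
        by_cases hia : i = a
        · subst hia; simp [h1]
        · have := h2 i
          by_cases hi : i ∈ s'
          · have hi' : i ∈ insert a s' := Finset.mem_insert_of_mem hi
            simpa [hi, hi'] using this
          · have hi' : i ∉ insert a s' := by simp [hia, hi]
            simp [hi']
    have hsub := condMI_nonneg μ A B W
    rw [condMI] at hsub
    rw [hcongr, Finset.sum_insert ha, Finset.card_insert_of_notMem ha]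
    push_cast
    linarith
end Subadd

set_option synthInstance.maxSize 2000
set_option maxHeartbeats 1000000

/-- **Cut-set entropy lemma (from the proof of Theorem 6).**
For any cascade code on the i.i.d. sources and any cut `l`:
`log M_l ≥ H(m_l) ≥ I(m_l; S_𝓛^n | S_{𝓛_l^c}^n) ≥ Σ_{i=1}^n I(S_{𝓛,i}; U_{l,i} | S_{𝓛_l^c,i})`,
where `U_{l,i} = (m_l, S_{𝓛_l^c}^{-i})`. -/
theorem cutset_entropy_lemma
    {L n : ℕ} {S : Fin L → Type}
    [∀ l, Fintype (S l)] [∀ l, DecidableEq (S l)]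
    {Zhat : Type}
    (pS : (∀ j, S j) → ℝ) (hpS0 : ∀ s, 0 ≤ pS s) (hpS1 : ∑ s, pS s = 1)
    (hn : 0 < n) (c : Code L n S Zhat) (l : Fin L) :
    entropy (iidPMF n pS hpS0 hpS1) (msgRV c l) ≤ Real.logb 2 (c.M l) ∧
    condMI (iidPMF n pS hpS0 hpS1) (msgRV c l) (fun ω => ω)
        (fun ω => fun i : Fin n => cutMask l (ω i))
      ≤ entropy (iidPMF n pS hpS0 hpS1) (msgRV c l) ∧
    (∑ i : Fin n,
        condMI (iidPMF n pS hpS0 hpS1) (fun ω => ω i)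
          (fun ω => (msgRV c l ω,
            fun i' : Fin n => if i' = i then none else some (cutMask l (ω i'))))
          (fun ω => cutMask l (ω i)))
      ≤ condMI (iidPMF n pS hpS0 hpS1) (msgRV c l) (fun ω => ω)
          (fun ω => fun i : Fin n => cutMask l (ω i)) := by
  set μ : FinPMF (Fin n → ∀ j, S j) := iidPMF n pS hpS0 hpS1 with hμ
  set M : (Fin n → ∀ j, S j) → Fin (c.M l) := msgRV c l with hMdef
  set Z : (Fin n → ∀ j, S j) → (Fin n → ∀ j, Option (S j)) :=
    fun ω => fun i => cutMask l (ω i) with hZdef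
  set W : (Fin n → ∀ j, S j) → Fin (c.M l) × (Fin n → ∀ j, Option (S j)) :=
    fun ω => (M ω, Z ω) with hWdef
  refine ⟨?_, ?_, ?_⟩
  · -- H(m_l) ≤ log M_l
    have h := entropy_le_logb_card μ M (by simpa using c.M_pos l)
    simpa using h
  · -- I ≤ H(m_l)
    have hid2 : entropy μ (fun ω => ((fun ω' => ω') ω, Z ω)) = entropy μ (fun ω => ω) :=
      entropy_congr μ (by
        intro ω ω'
        constructor
        · intro h; simpa using (Prod.ext_iff.mp h).1
        · intro h; rw [show ω = ω' from h])
    have hid3 : entropy μ (fun ω => (M ω, (fun ω' => ω') ω, Z ω)) = entropy μ (fun ω => ω) :=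
      entropy_congr μ (by
        intro ω ω'
        constructor
        · intro h; simpa using ((Prod.ext_iff.mp (Prod.ext_iff.mp h).2)).1
        · intro h; rw [show ω = ω' from h])
    have hIeq : condMI μ M (fun ω => ω) Z
        = entropy μ (fun ω => (M ω, Z ω)) - entropy μ Z := by
      rw [condMI, hid2, hid3]; ring
    have e1 : entropy μ (fun ω => (M ω, (fun _ => (0 : Fin 1)) ω)) = entropy μ M :=
      entropy_congr μ (by
        intro ω ω'
        simp [Prod.ext_iff])
    have e2 : entropy μ (fun ω => (Z ω, (fun _ => (0 : Fin 1)) ω)) = entropy μ Z :=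
      entropy_congr μ (by
        intro ω ω'
        simp [Prod.ext_iff])
    have e3 : entropy μ (fun ω => (M ω, Z ω, (fun _ => (0 : Fin 1)) ω))
        = entropy μ (fun ω => (M ω, Z ω)) :=
      entropy_congr μ (by
        intro ω ω'
        simp [Prod.ext_iff])
    have e4 : entropy μ (fun _ : Fin n → ∀ j, S j => (0 : Fin 1)) = 0 := entropy_const μ 0
    have hsub := condMI_nonneg μ M Z (fun _ => (0 : Fin 1))
    rw [condMI, e1, e2, e3, e4] at hsub
    rw [hIeq]
    linarith
  · -- sum of single-letter CMIs ≤ I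
    have hid2 : entropy μ (fun ω => ((fun ω' => ω') ω, Z ω)) = entropy μ (fun ω => ω) :=
      entropy_congr μ (by
        intro ω ω'
        constructor
        · intro h; simpa using (Prod.ext_iff.mp h).1
        · intro h; rw [show ω = ω' from h])
    have hid3 : entropy μ (fun ω => (M ω, (fun ω' => ω') ω, Z ω)) = entropy μ (fun ω => ω) :=
      entropy_congr μ (by
        intro ω ω'
        constructor
        · intro h; simpa using ((Prod.ext_iff.mp (Prod.ext_iff.mp h).2)).1
        · intro h; rw [show ω = ω' from h])
    have hIeq : condMI μ M (fun ω => ω) Z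
        = entropy μ (fun ω => (M ω, Z ω)) - entropy μ Z := by
      rw [condMI, hid2, hid3]; ring
    have hTZ : entropy μ Z = ∑ i, entropy μ (fun ω => cutMask l (ω i)) := by
      have h := entropy_iid_tuple pS hpS0 hpS1 (cutMask l) (n := n)
      rw [← hμ] at h
      exact h
    have hTX : entropy μ (fun ω => ω) = ∑ i, entropy μ (fun ω => ω i) := by
      have h := entropy_iid_tuple pS hpS0 hpS1 (fun s => s) (n := n)
      rw [← hμ] at h
      exact h
    have hIi : ∀ i : Fin n, condMI μ (fun ω => ω i)
        (fun ω => (M ω, fun i' : Fin n => if i' = i then none else some (cutMask l (ω i'))))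
        (fun ω => cutMask l (ω i))
        = entropy μ (fun ω => ω i) + entropy μ (fun ω => (M ω, Z ω))
          - entropy μ (fun ω => (ω i, M ω, Z ω)) - entropy μ (fun ω => cutMask l (ω i)) := by
      intro i
      rw [condMI]
      have e1 : entropy μ (fun ω => (ω i, cutMask l (ω i))) = entropy μ (fun ω => ω i) :=
        entropy_congr μ (by
          intro ω ω'
          constructor
          · intro h; exact (Prod.ext_iff.mp h).1
          · intro h
            have h' : ω i = ω' i := h
            rw [Prod.ext_iff]
            exact ⟨h', by rw [h']⟩)
      have e2 : entropy μ (fun ω => ((M ω,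
          fun i' : Fin n => if i' = i then none else some (cutMask l (ω i'))),
          cutMask l (ω i))) = entropy μ (fun ω => (M ω, Z ω)) :=
        entropy_congr μ (by
          intro ω ω'
          constructor
          · intro h
            obtain ⟨h12, h3⟩ := Prod.ext_iff.mp h
            obtain ⟨h1, h2⟩ := Prod.ext_iff.mp h12
            refine Prod.ext_iff.mpr ⟨h1, ?_⟩
            funext i'
            by_cases hii : i' = i
            · subst hii; exact h3
            · have h4 := congrFun h2 i'
              simp only [if_neg hii] at h4
              exact Option.some_injective _ h4
          · intro h
            obtain ⟨h1, h2⟩ := Prod.ext_iff.mp h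
            refine Prod.ext_iff.mpr ⟨Prod.ext_iff.mpr ⟨h1, ?_⟩, congrFun h2 i⟩
            funext i'
            by_cases hii : i' = i
            · simp [hii]
            · simp only [if_neg hii]
              exact congrArg some (congrFun h2 i'))
      have e3 : entropy μ (fun ω => (ω i, (M ω,
          fun i' : Fin n => if i' = i then none else some (cutMask l (ω i'))),
          cutMask l (ω i))) = entropy μ (fun ω => (ω i, M ω, Z ω)) :=
        entropy_congr μ (by
          intro ω ω'
          constructor
          · intro h
            obtain ⟨h0, hrest⟩ := Prod.ext_iff.mp h
            obtain ⟨h12, h3⟩ := Prod.ext_iff.mp hrest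
            obtain ⟨h1, h2⟩ := Prod.ext_iff.mp h12
            refine Prod.ext_iff.mpr ⟨h0, Prod.ext_iff.mpr ⟨h1, ?_⟩⟩
            funext i'
            by_cases hii : i' = i
            · subst hii; exact h3
            · have h4 := congrFun h2 i'
              simp only [if_neg hii] at h4
              exact Option.some_injective _ h4
          · intro h
            obtain ⟨h0, hrest⟩ := Prod.ext_iff.mp h
            obtain ⟨h1, h2⟩ := Prod.ext_iff.mp hrest
            refine Prod.ext_iff.mpr ⟨h0,
              Prod.ext_iff.mpr ⟨Prod.ext_iff.mpr ⟨h1, ?_⟩, congrFun h2 i⟩⟩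
            funext i'
            by_cases hii : i' = i
            · simp [hii]
            · simp only [if_neg hii]
              exact congrArg some (congrFun h2 i'))
      rw [e1, e2, e3]
    have hmask : entropy μ (fun ω => ((fun i : Fin n => if i ∈ (Finset.univ : Finset (Fin n))
          then some (ω i) else none), (M ω, Z ω)))
        ≤ ∑ i : Fin n, entropy μ (fun ω => (ω i, M ω, Z ω))
          - (((Finset.univ : Finset (Fin n)).card : ℝ)) * entropy μ (fun ω => (M ω, Z ω))
          + entropy μ (fun ω => (M ω, Z ω)) :=
      masked_subadd μ (fun ω i => ω i) (fun ω => (M ω, Z ω)) Finset.univ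
    rw [Finset.card_univ, Fintype.card_fin] at hmask
    have e5 : entropy μ (fun ω => ((fun i : Fin n => if i ∈ (Finset.univ : Finset (Fin n))
          then some (ω i) else none), (M ω, Z ω))) = entropy μ (fun ω => ω) :=
      entropy_congr μ (by
        intro ω ω'
        constructor
        · intro h
          have h1 := congrArg Prod.fst h
          funext i
          have h2 := congrFun h1 i
          simpa using h2
        · intro h; rw [show ω = ω' from h])
    rw [e5] at hmask
    calc (∑ i : Fin n, condMI μ (fun ω => ω i)
          (fun ω => (M ω, fun i' : Fin n => if i' = i then none else some (cutMask l (ω i'))))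
          (fun ω => cutMask l (ω i)))
        = ∑ i : Fin n, (entropy μ (fun ω => ω i) + entropy μ (fun ω => (M ω, Z ω))
            - entropy μ (fun ω => (ω i, M ω, Z ω)) - entropy μ (fun ω => cutMask l (ω i))) :=
          Finset.sum_congr rfl fun i _ => hIi i
      _ = (∑ i, entropy μ (fun ω => ω i)) + (n : ℝ) * entropy μ (fun ω => (M ω, Z ω))
            - (∑ i, entropy μ (fun ω => (ω i, M ω, Z ω)))
            - (∑ i, entropy μ (fun ω => cutMask l (ω i))) := by
          rw [Finset.sum_sub_distrib, Finset.sum_sub_distrib, Finset.sum_add_distrib,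
            Finset.sum_const, Finset.card_univ, Fintype.card_fin, nsmul_eq_mul]
      _ ≤ entropy μ (fun ω => (M ω, Z ω)) - entropy μ Z := by
          rw [hTZ, ← hTX]
          linarith
      _ = condMI μ M (fun ω => ω) Z := hIeq.symm

end Cascade
end

section
/- (Proposition 2, optimality of reverse water-filling) Let K ≥ 1, let λ_1^J,…,λ_K^J > 0, and let λ > 0. Define B = Σ_{k=1}^K log⁺(λ_k^J / λ) and D = Σ_{k=1}^K min{λ, λ_k^J}. Then: (i) for every d_1,…,d_K > 0 satisfying Σ_{k=1}^K log⁺(λ_k^J / d_k) ≤ B, one has Σ_{k=1}^K d_k ≥ D; and (ii) the choice d_k = min{λ, λ_k^J} for all k satisfies Σ_{k=1}^K log⁺(λ_k^J / d_k) = B and Σ_{k=1}^K d_k = D. Hence D is the optimal value of the problem: minimize Σ_k d_k over d_1,…,d_K > 0 subject to Σ_k log⁺(λ_k^J / d_k) ≤ B. -/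
/-!
For fixed `a > 0`, the rate `d ↦ log⁺ (a / d)` is convex and nonincreasing in `d`, and the line
of slope `-1 / λ` through the water-filling point `d = min λ a` supports it. Summing these
supporting lines over the coordinates shows that any distortion profile which does not exceed
the water-filling rate has total distortion at least `Σ_k min λ a_k`, and that bound is attained
by the water-filling profile itself, whose rate is `Σ_k log⁺ (a_k / λ)`. The base of the
logarithm is immaterial: `max 0 (logb 2 x) = log⁺ x / log 2`.
-/

open Finset

namespace Real

theorem log_le_posLog (x : ℝ) : log x ≤ log⁺ x := le_max_right _ _

theorem posLog_div_sub_posLog_div_le {a lam d : ℝ} (ha : 0 < a) (hlam : 0 < lam) (hd : 0 < d) :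
    log⁺ (a / lam) - log⁺ (a / d) ≤ (d - min lam a) / lam := by
  rcases le_total a lam with hal | hla
  · have hzero : log⁺ (a / lam) = 0 := by
      rw [posLog_eq_zero_iff, abs_of_pos (by positivity)]
      exact div_le_one_of_le₀ hal hlam.le
    rw [hzero, min_eq_right hal]
    rcases le_total a d with had | hda
    · have : 0 ≤ (d - a) / lam := div_nonneg (by linarith) hlam.le
      linarith [posLog_nonneg (x := a / d)]
    · have hlog : (a - d) / a ≤ log⁺ (a / d) :=
        calc (a - d) / a = 1 - (a / d)⁻¹ := by field_simp
          _ ≤ log (a / d) := one_sub_inv_le_log_of_pos (by positivity)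
          _ ≤ log⁺ (a / d) := log_le_posLog _
      calc 0 - log⁺ (a / d) ≤ -((a - d) / a) := by linarith
        _ ≤ -((a - d) / lam) := by gcongr
        _ = (d - a) / lam := by ring
  · rw [posLog_eq_log (by rw [abs_of_pos (by positivity)]; exact (one_le_div₀ hlam).2 hla),
      min_eq_left hla]
    have hsplit : log (a / lam) = log (a / d) + log (d / lam) := by
      rw [← log_mul (by positivity) (by positivity)]
      field_simp
    calc log (a / lam) - log⁺ (a / d) ≤ log (d / lam) := by
          linarith [log_le_posLog (a / d)]
      _ ≤ d / lam - 1 := log_le_sub_one_of_pos (by positivity)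
      _ = (d - lam) / lam := by field_simp

theorem posLog_div_min_eq {a lam : ℝ} (ha : 0 < a) (hlam : 0 < lam) :
    log⁺ (a / min lam a) = log⁺ (a / lam) := by
  rcases le_total lam a with hla | hal
  · rw [min_eq_left hla]
  · rw [min_eq_right hal, div_self ha.ne', posLog_one, eq_comm, posLog_eq_zero_iff,
      abs_of_pos (by positivity)]
    exact div_le_one_of_le₀ hal hlam.le

theorem max_zero_logb_eq_posLog_div {b : ℝ} (hb : 1 < b) (x : ℝ) :
    max 0 (logb b x) = log⁺ x / log b := by
  rw [logb, posLog_apply, ← max_div_div_right (log_pos hb).le, zero_div]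

end Real

open Real

section ReverseWaterfilling

variable {ι : Type*} [Fintype ι] {a : ι → ℝ} {lam : ℝ}

theorem sum_min_le_sum_of_sum_posLog_le (ha : ∀ i, 0 < a i) (hlam : 0 < lam) {d : ι → ℝ}
    (hd : ∀ i, 0 < d i) (hrate : ∑ i, log⁺ (a i / d i) ≤ ∑ i, log⁺ (a i / lam)) :
    ∑ i, min lam (a i) ≤ ∑ i, d i := by
  have hsupport : ∑ i, (log⁺ (a i / lam) - log⁺ (a i / d i))
      ≤ (∑ i, d i - ∑ i, min lam (a i)) / lam := by
    rw [← sum_sub_distrib, sum_div]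
    exact sum_le_sum fun i _ => posLog_div_sub_posLog_div_le (ha i) hlam (hd i)
  rw [sum_sub_distrib] at hsupport
  have hgap : 0 ≤ (∑ i, d i - ∑ i, min lam (a i)) / lam := by linarith
  linarith [(le_div_iff₀ hlam).1 hgap]

theorem sum_posLog_div_min_eq (ha : ∀ i, 0 < a i) (hlam : 0 < lam) :
    ∑ i, log⁺ (a i / min lam (a i)) = ∑ i, log⁺ (a i / lam) :=
  sum_congr rfl fun i _ => posLog_div_min_eq (ha i) hlam

end ReverseWaterfilling

theorem reverse_waterfilling_optimality_general
    (K : ℕ) (lamJ : Fin K → ℝ) (hJ : ∀ k, 0 < lamJ k)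
    (lam : ℝ) (hlam : 0 < lam) :
    (∀ dv : Fin K → ℝ, (∀ k, 0 < dv k) →
        (∑ k, max 0 (Real.logb 2 (lamJ k / dv k)))
          ≤ (∑ k, max 0 (Real.logb 2 (lamJ k / lam))) →
        (∑ k, min lam (lamJ k)) ≤ ∑ k, dv k) ∧
    ((∑ k, max 0 (Real.logb 2 (lamJ k / min lam (lamJ k))))
        = (∑ k, max 0 (Real.logb 2 (lamJ k / lam)))) ∧
    IsLeast {t : ℝ | ∃ dv : Fin K → ℝ, (∀ k, 0 < dv k) ∧
        (∑ k, max 0 (Real.logb 2 (lamJ k / dv k)))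
          ≤ (∑ k, max 0 (Real.logb 2 (lamJ k / lam))) ∧
        t = ∑ k, dv k}
      (∑ k, min lam (lamJ k)) := by
  simp only [max_zero_logb_eq_posLog_div one_lt_two, ← sum_div,
    div_le_div_iff_of_pos_right (log_pos one_lt_two), sum_posLog_div_min_eq hJ hlam]
  refine ⟨fun _ => sum_min_le_sum_of_sum_posLog_le hJ hlam, trivial, ⟨fun k => min lam (lamJ k), fun k => lt_min hlam (hJ k), ?_, rfl⟩, ?_⟩
  · rw [sum_posLog_div_min_eq hJ hlam]
  · rintro t ⟨dv, hdv, hrate, rfl⟩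
    exact sum_min_le_sum_of_sum_posLog_le hJ hlam hdv hrate

/-- **Proposition 2 (optimality of reverse water-filling).**
With `log⁺ x = max 0 (logb 2 x)`, `B = Σ_k log⁺(λ_k^J / λ)` and `D = Σ_k min {λ, λ_k^J}`:
(i) every `d : Fin K → ℝ` with `d_k > 0` and `Σ_k log⁺(λ_k^J / d_k) ≤ B` satisfies
`Σ_k d_k ≥ D`; (ii) the choice `d_k = min {λ, λ_k^J}` meets the rate constraint with
equality and has sum `D`; hence `D` is the optimal value of the reverse water-filling
problem, expressed as an `IsLeast` statement. -/
theorem reverse_waterfilling_optimality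
    (K : ℕ) (hK : 1 ≤ K) (lamJ : Fin K → ℝ) (hJ : ∀ k, 0 < lamJ k)
    (lam : ℝ) (hlam : 0 < lam) :
    (∀ dv : Fin K → ℝ, (∀ k, 0 < dv k) →
        (∑ k, max 0 (Real.logb 2 (lamJ k / dv k)))
          ≤ (∑ k, max 0 (Real.logb 2 (lamJ k / lam))) →
        (∑ k, min lam (lamJ k)) ≤ ∑ k, dv k) ∧
    ((∑ k, max 0 (Real.logb 2 (lamJ k / min lam (lamJ k))))
        = (∑ k, max 0 (Real.logb 2 (lamJ k / lam)))) ∧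
    IsLeast {t : ℝ | ∃ dv : Fin K → ℝ, (∀ k, 0 < dv k) ∧
        (∑ k, max 0 (Real.logb 2 (lamJ k / dv k)))
          ≤ (∑ k, max 0 (Real.logb 2 (lamJ k / lam))) ∧
        t = ∑ k, dv k}
      (∑ k, min lam (lamJ k)) :=
  reverse_waterfilling_optimality_general K lamJ hJ lam hlam
end

section
/- (Existence of a quantization covariance solving the matrix equation in the proof of Theorem 3) Let Σ and C be n×n complex Hermitian matrices with C positive definite and Σ − C positive definite (so 0 ≺ C ≺ Σ). Then there exists an n×n Hermitian positive definite matrix K such that Σ^{1/2} K^{1/2} (Σ + K)^{-1} K^{1/2} Σ^{1/2} = C, where M^{1/2} denotes the unique positive semidefinite square root of a positive semidefinite matrix M (note Σ + K is positive definite, hence invertible). -/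
open Matrix
open scoped ComplexOrder

/-- The positive semidefinite square root of a positive semidefinite matrix
(the definition `Matrix.PosSemidef.sqrt` of the older Mathlib, since removed). -/
noncomputable def Matrix.PosSemidef.sqrt {n 𝕜 : Type*} [Fintype n] [DecidableEq n] [RCLike 𝕜]
    {A : Matrix n n 𝕜} (hA : A.PosSemidef) : Matrix n n 𝕜 :=
  hA.1.eigenvectorUnitary.1 * diagonal ((↑) ∘ (√·) ∘ hA.1.eigenvalues) *
  (star hA.1.eigenvectorUnitary : Matrix n n 𝕜)

/-! With `s = Σ^{1/2}` and `X = K^{1/2}` one has `Σ + X² = X (X⁻¹ Σ X⁻¹ + 1) X`, so the equation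
becomes `X⁻¹ Σ X⁻¹ + 1 = s C⁻¹ s`, i.e. the Riccati equation `X D X = Σ` for
`D = s (C⁻¹ - Σ⁻¹) s`. Since `C ≺ Σ` forces `Σ⁻¹ ≺ C⁻¹`, `D` is positive definite, and the
Riccati equation has the positive definite solution
`X = D^{-1/2} (D^{1/2} Σ D^{1/2})^{1/2} D^{-1/2}`. -/

namespace Matrix

variable {n 𝕜 : Type*} [Fintype n] [DecidableEq n] [RCLike 𝕜]

section sqrt

open scoped MatrixOrder

lemma PosSemidef.sqrt_eq_cfcSqrt {A : Matrix n n 𝕜} (hA : A.PosSemidef) :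
    hA.sqrt = CFC.sqrt A := by
  rw [CFC.sqrt_eq_real_sqrt A hA.nonneg, cfcₙ_eq_cfc (hf0 := Real.sqrt_zero), hA.1.cfc_eq]
  simp [PosSemidef.sqrt, IsHermitian.cfc, Unitary.conjStarAlgAut_apply, Function.comp_def]

lemma PosSemidef.sqrt_mul_self {A : Matrix n n 𝕜} (hA : A.PosSemidef) :
    hA.sqrt * hA.sqrt = A := by
  rw [hA.sqrt_eq_cfcSqrt, CFC.sqrt_mul_sqrt_self A hA.nonneg]

lemma PosDef.posDef_sqrt {A : Matrix n n 𝕜} (hA : A.PosDef) (hA' : A.PosSemidef) :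
    hA'.sqrt.PosDef := by
  rw [hA'.sqrt_eq_cfcSqrt, ← isStrictlyPositive_iff_posDef]
  exact hA.isStrictlyPositive.sqrt

lemma PosSemidef.eq_sqrt_of_mul_self_eq {A B : Matrix n n 𝕜} (hA : A.PosSemidef)
    (hB : B.PosSemidef) (hAB : A * A = B) : A = hB.sqrt := by
  rw [hB.sqrt_eq_cfcSqrt]
  exact (CFC.sqrt_unique hAB hA.nonneg).symm

end sqrt

lemma PosDef.mul_mul_same_of_isHermitian {A B : Matrix n n 𝕜} (hA : A.PosDef)
    (hB : B.IsHermitian) (hBu : IsUnit B) : (B * A * B).PosDef := by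
  simpa [star_eq_conjTranspose, hB.eq] using (IsUnit.posDef_star_left_conjugate_iff hBu).mpr hA

lemma PosDef.inv_sub_inv {A B : Matrix n n 𝕜} (hA : A.PosDef) (hBA : (B - A).PosDef) :
    (A⁻¹ - B⁻¹).PosDef := by
  have hB : B.PosDef := by simpa using hBA.add hA
  have : Invertible A := hA.isUnit.invertible
  have : Invertible B := hB.isUnit.invertible
  -- symmetrize `A⁻¹ - B⁻¹ = B⁻¹ (B - A) A⁻¹` using `A⁻¹ = B⁻¹ + B⁻¹ (B - A) A⁻¹`
  have key : A⁻¹ - B⁻¹ =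
      B⁻¹ * (B - A) * B⁻¹ + ((B - A) * B⁻¹)ᴴ * A⁻¹ * ((B - A) * B⁻¹) := by
    rw [conjTranspose_mul, hBA.1.eq, hB.1.inv.eq]
    simp only [mul_sub, sub_mul, Matrix.mul_assoc, Matrix.inv_mul_of_invertible,
      Matrix.mul_inv_of_invertible, Matrix.inv_mul_cancel_left_of_invertible, Matrix.mul_one,
      Matrix.one_mul]
    abel
  rw [key]
  exact (hBA.mul_mul_same_of_isHermitian hB.1.inv (isUnit_nonsing_inv_iff.mpr hB.isUnit))
    |>.add_posSemidef (hA.inv.posSemidef.conjTranspose_mul_mul_same _)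

lemma PosDef.exists_posDef_mul_mul_eq {D S : Matrix n n 𝕜} (hD : D.PosDef) (hS : S.PosDef) :
    ∃ X : Matrix n n 𝕜, X.PosDef ∧ X * D * X = S := by
  set d := hD.posSemidef.sqrt
  have hd : d.PosDef := hD.posDef_sqrt hD.posSemidef
  have hdd : d * d = D := hD.posSemidef.sqrt_mul_self
  have : Invertible d := hd.isUnit.invertible
  have hdSd : (d * S * d).PosDef := hS.mul_mul_same_of_isHermitian hd.1 hd.isUnit
  set e := hdSd.posSemidef.sqrt
  have he : e.PosDef := hdSd.posDef_sqrt hdSd.posSemidef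
  have hee : e * e = d * S * d := hdSd.posSemidef.sqrt_mul_self
  refine ⟨d⁻¹ * e * d⁻¹,
    he.mul_mul_same_of_isHermitian hd.1.inv (isUnit_nonsing_inv_iff.mpr hd.isUnit), ?_⟩
  calc d⁻¹ * e * d⁻¹ * D * (d⁻¹ * e * d⁻¹)
      = d⁻¹ * (e * e) * d⁻¹ := by
        rw [← hdd]
        simp only [Matrix.mul_assoc, Matrix.inv_mul_cancel_left_of_invertible,
          Matrix.mul_inv_cancel_left_of_invertible]
    _ = S := by
        rw [hee]
        simp only [Matrix.mul_assoc, Matrix.inv_mul_cancel_left_of_invertible,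
          Matrix.mul_inv_of_invertible, Matrix.mul_one]

lemma mul_inv_add_mul_self_mul_eq {R : Type*} [CommRing R] {X D S : Matrix n n R}
    [Invertible X] (h : X * D * X = S) :
    X * (S + X * X)⁻¹ * X = (D + 1)⁻¹ := by
  rw [← h, show X * D * X + X * X = X * ((D + 1) * X) by noncomm_ring, Matrix.mul_inv_rev,
    Matrix.mul_inv_rev]
  simp only [Matrix.mul_assoc, Matrix.mul_inv_cancel_left_of_invertible,
    Matrix.inv_mul_of_invertible, Matrix.mul_one]

end Matrix

theorem exists_quantization_covariance_general
    {n : ℕ} (Sig C : Matrix (Fin n) (Fin n) ℂ)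
    (hC : C.PosDef) (hSC : (Sig - C).PosDef)
    (hSig : Sig.PosSemidef) :
    ∃ (K : Matrix (Fin n) (Fin n) ℂ) (hK : K.PosDef),
      hSig.sqrt * hK.posSemidef.sqrt * (Sig + K)⁻¹ * hK.posSemidef.sqrt * hSig.sqrt
        = C := by
  have hSigPD : Sig.PosDef := by simpa using hSC.add hC
  set s := hSig.sqrt
  have hs : s.PosDef := hSigPD.posDef_sqrt hSig
  have : Invertible s := hs.isUnit.invertible
  have : Invertible C := hC.isUnit.invertible
  have hss : s * s = Sig := hSig.sqrt_mul_self
  have hD : (s * (C⁻¹ - Sig⁻¹) * s).PosDef :=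
    (hC.inv_sub_inv hSC).mul_mul_same_of_isHermitian hs.1 hs.isUnit
  have hD1 : s * (C⁻¹ - Sig⁻¹) * s + 1 = s * C⁻¹ * s := by
    rw [← hss, mul_sub, sub_mul, Matrix.mul_inv_rev]
    simp only [Matrix.mul_assoc, Matrix.mul_inv_cancel_left_of_invertible,
      Matrix.inv_mul_of_invertible, sub_add_cancel]
  obtain ⟨X, hX, hXDX⟩ := hD.exists_posDef_mul_mul_eq hSigPD
  have : Invertible X := hX.isUnit.invertible
  have hK : (X * X).PosDef := by simpa using PosDef.one.mul_mul_same_of_isHermitian hX.1 hX.isUnit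
  refine ⟨X * X, hK, ?_⟩
  rw [← hX.posSemidef.eq_sqrt_of_mul_self_eq hK.posSemidef rfl,
    show s * X * (Sig + X * X)⁻¹ * X * s = s * (X * (Sig + X * X)⁻¹ * X) * s by
      simp only [Matrix.mul_assoc],
    mul_inv_add_mul_self_mul_eq hXDX, hD1, Matrix.mul_inv_rev, Matrix.mul_inv_rev,
    Matrix.inv_inv_of_invertible]
  simp only [Matrix.mul_assoc, Matrix.mul_inv_cancel_left_of_invertible,
    Matrix.inv_mul_of_invertible, Matrix.mul_one]

/-- **Existence of a quantization covariance (matrix equation in the proof of Theorem 3).**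
If `Σ` and `C` are Hermitian with `C` positive definite and `Σ - C` positive definite
(so `0 ≺ C ≺ Σ`; in particular `Σ` is positive semidefinite, which we record as the
derivable hypothesis `hSig` in order to form its square root), then there is a Hermitian
positive definite `K` with `Σ^{1/2} K^{1/2} (Σ + K)⁻¹ K^{1/2} Σ^{1/2} = C`. -/
theorem exists_quantization_covariance
    {n : ℕ} (Sig C : Matrix (Fin n) (Fin n) ℂ)
    (hSigHerm : Sig.IsHermitian) (hCHerm : C.IsHermitian)
    (hC : C.PosDef) (hSC : (Sig - C).PosDef)
    (hSig : Sig.PosSemidef) :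
    ∃ (K : Matrix (Fin n) (Fin n) ℂ) (hK : K.PosDef),
      hSig.sqrt * hK.posSemidef.sqrt * (Sig + K)⁻¹ * hK.posSemidef.sqrt * hSig.sqrt
        = C :=
  exists_quantization_covariance_general Sig C hC hSC hSig
end
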